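/- arXiv:1506.00312 — 2 statements merged into one kernel-verified Lean document; each statement's English description precedes it below -/
import Mathlib

section
/- Consider a K-armed Copeland bandit problem (K ≥ 2) with preference probabilities p_{ij} ∈ [0,1] satisfying p_{ij} + p_{ji} = 1 and p_{ij} ≠ 1/2 for i ≠ j. Define the Copeland score Cpld(i) = #{j ≠ i : p_{ij} > 1/2} and the normalized score cpld(i) = Cpld(i)/(K−1). Let D_d = {i : cpld(i) ≥ 1 − d/(K−1)} be the set of arms beaten by at most d other arms. Then |D_d| ≤ 2d + 1. -/
/-- In a `K`-armed Copeland bandit problem with no ties, the set of arms whose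
normalized Copeland score is at least `1 - d/(K-1)` has at most `2d + 1` elements. -/
theorem copeland_high_score_card_le (K : ℕ) (hK : 2 ≤ K)
    (p : Fin K → Fin K → ℝ)
    (hsum : ∀ i j, p i j + p j i = 1)
    (hnt : ∀ i j, i ≠ j → p i j ≠ 1 / 2)
    (hrange : ∀ i j, p i j ∈ Set.Icc (0 : ℝ) 1)
    (d : ℕ) :
    Nat.card {i : Fin K //
        (Nat.card {j : Fin K // j ≠ i ∧ 1 / 2 < p i j} : ℝ) / (K - 1)
          ≥ 1 - (d : ℝ) / (K - 1)} ≤ 2 * d + 1 := by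
  classical
  -- wins and losses of arm i among all arms
  set W : Fin K → Finset (Fin K) :=
    fun i => Finset.univ.filter (fun j => j ≠ i ∧ 1 / 2 < p i j) with hW
  set L : Fin K → Finset (Fin K) :=
    fun i => Finset.univ.filter (fun j => j ≠ i ∧ 1 / 2 < p j i) with hL
  have hWcard : ∀ i, Nat.card {j : Fin K // j ≠ i ∧ 1 / 2 < p i j} = (W i).card := by
    intro i
    rw [Nat.card_eq_fintype_card, Fintype.card_subtype]
  -- trichotomy: for i ≠ j exactly one beats the other
  have htri : ∀ i j : Fin K, j ≠ i → (1 / 2 < p i j ↔ ¬ (1 / 2 < p j i)) := by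
    intro i j hij
    have h1 := hsum i j
    have h2 : p i j ≠ 1 / 2 := hnt i j (Ne.symm hij)
    constructor
    · intro h; intro h'; linarith
    · intro h; push_neg at h
      rcases lt_or_eq_of_le h with h' | h'
      · linarith
      · exfalso; exact hnt j i hij h'
  -- wins + losses = K - 1
  have hWL : ∀ i : Fin K, (W i).card + (L i).card = K - 1 := by
    intro i
    have hdisj : Disjoint (W i) (L i) := by
      rw [Finset.disjoint_left]
      intro j hj hj'
      simp only [hW, hL, Finset.mem_filter] at hj hj'
      have := hsum i j
      linarith [hj.2.2, hj'.2.2]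
    have hunion : W i ∪ L i = Finset.univ.erase i := by
      ext j
      simp only [hW, hL, Finset.mem_union, Finset.mem_filter, Finset.mem_univ, true_and,
        Finset.mem_erase, and_true]
      constructor
      · rintro (⟨h, _⟩ | ⟨h, _⟩) <;> exact h
      · intro h
        by_cases hb : 1 / 2 < p i j
        · exact Or.inl ⟨h, hb⟩
        · refine Or.inr ⟨h, ?_⟩
          by_contra hc
          exact hb ((htri i j h).mpr hc)
    have := Finset.card_union_of_disjoint hdisj
    rw [hunion] at this
    rw [← this]
    simp [Finset.card_erase_of_mem, Finset.card_univ]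
  -- the set of high-score arms
  set S : Finset (Fin K) := Finset.univ.filter
    (fun i => ((W i).card : ℝ) / (K - 1) ≥ 1 - (d : ℝ) / (K - 1)) with hS
  have hgoal : Nat.card {i : Fin K //
      (Nat.card {j : Fin K // j ≠ i ∧ 1 / 2 < p i j} : ℝ) / (K - 1)
        ≥ 1 - (d : ℝ) / (K - 1)} = S.card := by
    rw [Nat.card_eq_fintype_card]
    rw [Fintype.card_subtype]
    congr 1
    apply Finset.filter_congr
    intro i _
    rw [hWcard i]
  rw [hgoal]
  -- each i in S loses to at most d arms
  have hKpos : (0 : ℝ) < (K : ℝ) - 1 := by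
    have : (2 : ℝ) ≤ (K : ℝ) := by exact_mod_cast hK
    linarith
  have hLd : ∀ i ∈ S, (L i).card ≤ d := by
    intro i hi
    simp only [hS, Finset.mem_filter] at hi
    have h1 : (1 : ℝ) - (d : ℝ) / ((K : ℝ) - 1) ≤ ((W i).card : ℝ) / ((K : ℝ) - 1) := hi.2
    rw [le_div_iff₀ hKpos] at h1
    have h2 : (K : ℝ) - 1 - (d : ℝ) ≤ ((W i).card : ℝ) := by
      have : (1 - (d : ℝ) / ((K : ℝ) - 1)) * ((K : ℝ) - 1) = (K : ℝ) - 1 - d := by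
        field_simp
      linarith [this ▸ h1]
    have h3 : (K - 1 : ℕ) ≤ (W i).card + d := by
      have hK1 : ((K - 1 : ℕ) : ℝ) = (K : ℝ) - 1 := by
        have : (1 : ℕ) ≤ K := by omega
        push_cast [this]
        ring
      have : ((K - 1 : ℕ) : ℝ) ≤ ((W i).card + d : ℕ) := by push_cast; rw [hK1]; linarith
      exact_mod_cast this
    have := hWL i
    omega
  -- double counting within S
  set WS : Fin K → Finset (Fin K) :=
    fun i => S.filter (fun j => j ≠ i ∧ 1 / 2 < p i j) with hWS
  set LS : Fin K → Finset (Fin K) :=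
    fun i => S.filter (fun j => j ≠ i ∧ 1 / 2 < p j i) with hLS
  have hLSd : ∀ i ∈ S, (LS i).card ≤ d := by
    intro i hi
    refine le_trans (Finset.card_le_card ?_) (hLd i hi)
    exact Finset.filter_subset_filter _ (Finset.subset_univ S)
  -- wins + losses within S = |S| - 1
  have hWLS : ∀ i ∈ S, (WS i).card + (LS i).card = S.card - 1 := by
    intro i hi
    have hdisj : Disjoint (WS i) (LS i) := by
      rw [Finset.disjoint_left]
      intro j hj hj'
      simp only [hWS, hLS, Finset.mem_filter] at hj hj'
      have := hsum i j
      linarith [hj.2.2, hj'.2.2]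
    have hunion : WS i ∪ LS i = S.erase i := by
      ext j
      simp only [hWS, hLS, Finset.mem_union, Finset.mem_filter, Finset.mem_erase]
      constructor
      · rintro (⟨hjS, h, _⟩ | ⟨hjS, h, _⟩) <;> exact ⟨h, hjS⟩
      · rintro ⟨h, hjS⟩
        by_cases hb : 1 / 2 < p i j
        · exact Or.inl ⟨hjS, h, hb⟩
        · refine Or.inr ⟨hjS, h, ?_⟩
          by_contra hc
          exact hb ((htri i j h).mpr hc)
    have := Finset.card_union_of_disjoint hdisj
    rw [hunion, Finset.card_erase_of_mem hi] at this
    omega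
  -- total wins = total losses within S
  have hsumeq : ∑ i ∈ S, (WS i).card = ∑ i ∈ S, (LS i).card := by
    have key : ∀ (q : Fin K → Fin K → Prop) [DecidablePred fun x : Fin K × Fin K => q x.1 x.2]
        [∀ i, DecidablePred (q i)],
        ∑ i ∈ S, (S.filter (fun j => q i j)).card
          = ∑ i ∈ S, ∑ j ∈ S, if q i j then 1 else 0 := by
      intro q _ _
      refine Finset.sum_congr rfl fun i _ => ?_
      rw [Finset.card_filter]
    calc ∑ i ∈ S, (WS i).card
        = ∑ i ∈ S, ∑ j ∈ S, if j ≠ i ∧ 1 / 2 < p i j then 1 else 0 := key _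
      _ = ∑ j ∈ S, ∑ i ∈ S, if j ≠ i ∧ 1 / 2 < p i j then 1 else 0 := Finset.sum_comm
      _ = ∑ i ∈ S, ∑ j ∈ S, if i ≠ j ∧ 1 / 2 < p j i then 1 else 0 := rfl
      _ = ∑ i ∈ S, ∑ j ∈ S, if j ≠ i ∧ 1 / 2 < p j i then 1 else 0 := by
          refine Finset.sum_congr rfl fun i _ => Finset.sum_congr rfl fun j _ => ?_
          simp [ne_comm]
      _ = ∑ i ∈ S, (LS i).card := (key _).symm
  -- conclude
  have htotal : S.card * (S.card - 1) = ∑ i ∈ S, ((WS i).card + (LS i).card) := by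
    rw [Finset.sum_congr rfl hWLS, Finset.sum_const, smul_eq_mul]
  have h2L : ∑ i ∈ S, ((WS i).card + (LS i).card) = 2 * ∑ i ∈ S, (LS i).card := by
    rw [Finset.sum_add_distrib, hsumeq]; ring
  have hle : S.card * (S.card - 1) ≤ 2 * (d * S.card) := by
    rw [htotal, h2L]
    have : ∑ i ∈ S, (LS i).card ≤ ∑ i ∈ S, d := Finset.sum_le_sum hLSd
    simp only [Finset.sum_const, smul_eq_mul] at this
    rw [mul_comm d S.card]
    omega
  rcases Nat.eq_zero_or_pos S.card with h0 | hpos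
  · omega
  · have : S.card * (S.card - 1) ≤ S.card * (2 * d) := by
      calc S.card * (S.card - 1) ≤ 2 * (d * S.card) := hle
        _ = S.card * (2 * d) := by ring
    have := Nat.le_of_mul_le_mul_left this hpos
    omega
end

section
/- Consider a K-armed Copeland bandit problem (K ≥ 2) with no ties (p_{ij} ≠ 1/2 for i ≠ j), and let cpld(i) = #{j ≠ i : p_{ij} > 1/2}/(K−1) be the normalized Copeland score. Then there exists a universal constant c > 0 such that for every such problem, ∑_{i : cpld(i) < 1} 1/(1 − cpld(i)) ≤ c · K · log K. -/
/-!
Let `ℓ i` be the number of arms beating `i`; with no ties, `1 / (1 - cpld i) = (K - 1) / ℓ i`.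
The `m` arms with `ℓ i ≤ d` play `m (m - 1) / 2` games among themselves, so one of them loses
at least `(m - 1) / 2` of those, whence `m ≤ 2 d + 1`. Writing
`1 / ℓ = 1 / K + ∑_{ℓ ≤ d < K} (1 / d - 1 / (d + 1))` and exchanging the sums bounds `∑ 1 / ℓ i`
by `1 + ∑_{d < K} (2 d + 1) / (d (d + 1)) ≤ 1 + 2 H_K`.
-/

open Finset

theorem one_div_one_sub_div_of_add_eq {a b m : ℝ} (h : a + b = m) (hm : m ≠ 0) :
    1 / (1 - a / m) = m * b⁻¹ := by
  have : 1 - a / m = b / m := by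
    field_simp
    linarith
  rw [this, one_div_div, div_eq_mul_inv]

theorem half_lt_iff_not_half_lt {a b : ℝ} (hab : a + b = 1) (ha : a ≠ 1 / 2) :
    1 / 2 < a ↔ ¬ 1 / 2 < b := by
  constructor
  · intro h h'
    linarith
  · intro h
    exact lt_of_le_of_ne (by linarith [not_lt.mp h]) ha.symm

theorem inv_eq_inv_add_sum_Ico {b n : ℕ} (hbn : b ≤ n) :
    (b : ℝ)⁻¹ = (n : ℝ)⁻¹ + ∑ d ∈ Ico b n, ((d : ℝ)⁻¹ - ((d + 1 : ℕ) : ℝ)⁻¹) := by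
  have := sum_Ico_sub (fun d : ℕ => -(d : ℝ)⁻¹) hbn
  simp only [sub_neg_eq_add, neg_add_eq_sub] at this
  linarith

theorem sum_inv_le_of_card_filter_le {ι : Type*} {s : Finset ι} {f : ι → ℕ} {n : ℕ}
    (hf : ∀ i ∈ s, 1 ≤ f i ∧ f i ≤ n) (hcard : ∀ d, #{i ∈ s | f i ≤ d} ≤ 2 * d + 1) :
    ∑ i ∈ s, (f i : ℝ)⁻¹ ≤ #s / n + 2 * harmonic n := by
  set g : ℕ → ℝ := fun d => (d : ℝ)⁻¹ - ((d + 1 : ℕ) : ℝ)⁻¹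
  have hg : ∀ d ∈ Ico 1 n, (2 * d + 1 : ℕ) * g d ≤ 2 * (d : ℝ)⁻¹ := by
    intro d hd
    have hd : (1 : ℝ) ≤ d := by exact_mod_cast (mem_Ico.mp hd).1
    simp only [g]
    push_cast
    rw [inv_sub_inv (by positivity) (by positivity)]
    field_simp
    nlinarith
  have hlayer : ∀ i ∈ s, (f i : ℝ)⁻¹ = (n : ℝ)⁻¹ + ∑ d ∈ Ico 1 n, if f i ≤ d then g d else 0 := by
    intro i hi
    rw [← sum_filter, inv_eq_inv_add_sum_Ico (hf i hi).2]
    congr 2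
    ext d
    simp only [mem_Ico, mem_filter]
    have := hf i hi
    omega
  calc ∑ i ∈ s, (f i : ℝ)⁻¹
      = #s / n + ∑ d ∈ Ico 1 n, (#{i ∈ s | f i ≤ d} : ℕ) * g d := by
        rw [sum_congr rfl hlayer, sum_add_distrib, sum_comm]
        simp [← sum_filter, div_eq_mul_inv]
    _ ≤ #s / n + ∑ d ∈ Ico 1 n, (2 * d + 1 : ℕ) * g d := by
        gcongr with d hd
        · have hd : (1 : ℝ) ≤ d := by exact_mod_cast (mem_Ico.mp hd).1
          exact sub_nonneg.mpr (inv_anti₀ (by positivity) (by push_cast; linarith))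
        · exact hcard d
    _ ≤ #s / n + 2 * ∑ d ∈ Icc 1 n, (d : ℝ)⁻¹ := by
        rw [mul_sum]
        gcongr
        exact (sum_le_sum hg).trans
          (sum_le_sum_of_subset_of_nonneg Ico_subset_Icc_self fun _ _ _ => by positivity)
    _ = #s / n + 2 * harmonic n := by
        simp [harmonic_eq_sum_Icc]

section Tournament

variable {α : Type*} [DecidableEq α] {r : α → α → Prop} [DecidableRel r]

theorem card_wins_add_card_losses [Fintype α] (htour : ∀ i j, i ≠ j → (r i j ↔ ¬ r j i))
    (i : α) : #{j | j ≠ i ∧ r i j} + #{j | j ≠ i ∧ r j i} = Fintype.card α - 1 := by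
  rw [← card_univ, ← card_erase_of_mem (mem_univ i),
    ← card_filter_add_card_filter_not (s := univ.erase i) (r i)]
  congr 2 <;> ext j
  · simp
  · simp only [mem_filter, mem_erase, mem_univ, true_and, and_true]
    exact and_congr_right fun hji => htour j i hji

theorem card_mul_card_sub_one_le_two_mul_sum_card_losses (s : Finset α)
    (htotal : ∀ i j, i ≠ j → r i j ∨ r j i) :
    #s * (#s - 1) ≤ 2 * ∑ i ∈ s, #{j ∈ s | j ≠ i ∧ r j i} := by
  have hswap : ∑ i ∈ s, #{j ∈ s | j ≠ i ∧ r j i} = ∑ i ∈ s, #{j ∈ s | j ≠ i ∧ r i j} := by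
    simp only [card_filter]
    rw [sum_comm]
    simp only [ne_comm]
  have hdeg : ∀ i ∈ s, #s - 1 ≤ #{j ∈ s | j ≠ i ∧ r j i} + #{j ∈ s | j ≠ i ∧ r i j} := by
    intro i hi
    rw [← card_erase_of_mem hi]
    refine (card_le_card fun j hj => ?_).trans (card_union_le _ _)
    obtain ⟨hji, hjs⟩ := mem_erase.mp hj
    simpa [hjs, hji] using (htotal j i hji)
  calc #s * (#s - 1) = ∑ i ∈ s, (#s - 1) := by rw [sum_const, smul_eq_mul]
    _ ≤ ∑ i ∈ s, (#{j ∈ s | j ≠ i ∧ r j i} + #{j ∈ s | j ≠ i ∧ r i j}) := sum_le_sum hdeg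
    _ = 2 * ∑ i ∈ s, #{j ∈ s | j ≠ i ∧ r j i} := by rw [sum_add_distrib, ← hswap, two_mul]

theorem card_filter_card_losses_le [Fintype α] (htotal : ∀ i j, i ≠ j → r i j ∨ r j i) (d : ℕ) :
    #{i | #{j | j ≠ i ∧ r j i} ≤ d} ≤ 2 * d + 1 := by
  set s := ({i | #{j | j ≠ i ∧ r j i} ≤ d} : Finset α)
  have hloss : ∀ i ∈ s, #{j ∈ s | j ≠ i ∧ r j i} ≤ d := fun i hi =>
    (card_le_card (filter_subset_filter _ (subset_univ s))).trans (mem_filter.mp hi).2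
  have := (card_mul_card_sub_one_le_two_mul_sum_card_losses s htotal).trans
    (Nat.mul_le_mul_left 2 (sum_le_sum hloss))
  rw [sum_const, smul_eq_mul] at this
  rcases Nat.eq_zero_or_pos #s with h0 | hpos
  · omega
  · have := Nat.le_of_mul_le_mul_left (by linarith : #s * (#s - 1) ≤ #s * (2 * d)) hpos
    omega

theorem sum_inv_card_losses_le [Fintype α] (htotal : ∀ i j, i ≠ j → r i j ∨ r j i) :
    ∑ i ∈ {i | 0 < #{j | j ≠ i ∧ r j i}}, (#{j | j ≠ i ∧ r j i} : ℝ)⁻¹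
      ≤ 1 + 2 * harmonic (Fintype.card α) := by
  have hcard : (#{i | 0 < #{j | j ≠ i ∧ r j i}} : ℝ) / Fintype.card α ≤ 1 :=
    div_le_one_of_le₀ (by exact_mod_cast card_le_univ _) (Nat.cast_nonneg _)
  have := sum_inv_le_of_card_filter_le (s := {i | 0 < #{j | j ≠ i ∧ r j i}})
    (n := Fintype.card α)
    (fun i hi => ⟨(mem_filter.mp hi).2, card_le_univ _⟩)
    fun d => (card_le_card (filter_subset_filter _ (filter_subset _ _))).trans
      (card_filter_card_losses_le htotal d)
  linarith

end Tournament

/-- There is a universal constant `c > 0` such that for every `K`-armed Copeland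
bandit problem (`K ≥ 2`) with no ties,
`∑_{i : cpld i < 1} 1/(1 - cpld i) ≤ c K log K`, where `cpld` is the normalized
Copeland score. -/
theorem sum_inv_one_sub_cpld_le :
    ∃ c : ℝ, 0 < c ∧
      ∀ (K : ℕ), 2 ≤ K →
        ∀ p : Fin K → Fin K → ℝ,
          (∀ i j, p i j + p j i = 1) →
          (∀ i j, i ≠ j → p i j ≠ 1 / 2) →
          ∑ i ∈ Finset.univ.filter (fun i : Fin K =>
              (Nat.card {j : Fin K // j ≠ i ∧ 1 / 2 < p i j} : ℝ) / (K - 1) < 1),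
            1 / (1 - (Nat.card {j : Fin K // j ≠ i ∧ 1 / 2 < p i j} : ℝ) / (K - 1))
          ≤ c * K * Real.log K := by
  refine ⟨8, by norm_num, fun K hK p hp hne => ?_⟩
  have htour : ∀ i j, i ≠ j → (1 / 2 < p i j ↔ ¬ 1 / 2 < p j i) :=
    fun i j hij => half_lt_iff_not_half_lt (hp i j) (hne i j hij)
  set ℓ : Fin K → ℕ := fun i => #{j | j ≠ i ∧ 1 / 2 < p j i}
  have hK' : (2 : ℝ) ≤ K := by exact_mod_cast hK
  have hwins : ∀ i, (Nat.card {j : Fin K // j ≠ i ∧ 1 / 2 < p i j} : ℝ) + ℓ i = K - 1 := by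
    intro i
    have := card_wins_add_card_losses htour i
    rw [Fintype.card_fin] at this
    rw [Nat.card_eq_fintype_card, Fintype.card_subtype, ← Nat.cast_add, this,
      Nat.cast_sub (by omega), Nat.cast_one]
  have hfilter : ∀ i ∈ univ,
      (Nat.card {j : Fin K // j ≠ i ∧ 1 / 2 < p i j} : ℝ) / (K - 1) < 1 ↔ 0 < ℓ i := by
    intro i _
    rw [div_lt_one (by linarith), ← Nat.cast_pos (α := ℝ)]
    constructor <;> intro <;> linarith [hwins i]
  rw [filter_congr hfilter,
    sum_congr rfl fun i _ => one_div_one_sub_div_of_add_eq (hwins i) (by linarith), ← mul_sum]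
  have htotal : ∀ i j, i ≠ j → 1 / 2 < p i j ∨ 1 / 2 < p j i :=
    fun i j hij => or_iff_not_imp_right.mpr (htour i j hij).mpr
  have hsum := sum_inv_card_losses_le htotal
  rw [Fintype.card_fin] at hsum
  have hharm := harmonic_le_one_add_log K
  have hlog : (1 : ℝ) / 2 < Real.log K :=
    lt_of_lt_of_le (by linarith [Real.log_two_gt_d9]) (Real.log_le_log (by norm_num) hK')
  calc ((K : ℝ) - 1) * ∑ i ∈ {i | 0 < ℓ i}, (ℓ i : ℝ)⁻¹
      ≤ (K - 1) * (1 + 2 * (1 + Real.log K)) :=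
        mul_le_mul_of_nonneg_left (by linarith) (by linarith)
    _ ≤ 8 * K * Real.log K := by nlinarith
end
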